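/- With notation as in the Levi form computation for ρ(z,w) = Σₖ ‖w_{(k)}‖^{2pₖ} - e^{-μ‖z‖²} at a boundary point (z₀,w₀) with all w_{(k)0} ≠ 0, for every tangent vector T = (ζ, η_{(1)},…,η_{(l)}) in the complex tangent space the Levi form satisfies L_ρ(T,T) ≥ μ e^{-μ‖z₀‖²} ‖ζ‖², and in particular L_ρ(T,T) > 0 whenever ζ ≠ 0. -/

import Mathlib

/-!
The tangency condition expresses `μ e^{-μ‖z₀‖²} ⟪z₀, ζ⟫` through the `w`-components of `T`.
Splitting `‖w_{(k)0}‖^{2(pₖ-1)} = ‖w_{(k)0}‖^{pₖ-2} ‖w_{(k)0}‖^{pₖ}` and applying Cauchy–Schwarz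
together with the boundary equation `Σₖ ‖w_{(k)0}‖^{2pₖ} = e^{-μ‖z₀‖²}` bounds the negative term
`μ² e^{-μ‖z₀‖²} |⟪z₀, ζ⟫|²` of the Levi form by `Σₖ pₖ² ‖w_{(k)0}‖^{2(pₖ-2)} |⟪w_{(k)0}, η_{(k)}⟫|²`,
and Cauchy–Schwarz in each block shows that the `w`-part of the Levi form dominates this sum.
-/

open MeasureTheory Real ComplexInnerProductSpace

/-- The Levi form of the defining function
`ρ(z,w) = Σₖ ‖w_{(k)}‖^{2pₖ} - e^{-μ‖z‖²}` at a point `(z₀,w₀)`, evaluated on a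
tangent vector `T = (ζ, η)`. -/
noncomputable def leviForm (n₀ l : ℕ) (n : Fin l → ℕ) (p : Fin l → ℝ) (μ : ℝ)
    (z₀ : EuclideanSpace ℂ (Fin n₀)) (w₀ : (i : Fin l) → EuclideanSpace ℂ (Fin (n i)))
    (ζ : EuclideanSpace ℂ (Fin n₀)) (η : (i : Fin l) → EuclideanSpace ℂ (Fin (n i))) : ℝ :=
  (∑ k, p k * (p k - 1) * ‖w₀ k‖ ^ (2 * (p k - 2)) * ‖⟪w₀ k, η k⟫‖ ^ 2)
    + (∑ k, p k * ‖w₀ k‖ ^ (2 * (p k - 1)) * ‖η k‖ ^ 2)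
    + μ * Real.exp (-μ * ‖z₀‖ ^ 2) * ‖ζ‖ ^ 2
    - μ ^ 2 * Real.exp (-μ * ‖z₀‖ ^ 2) * ‖⟪z₀, ζ⟫‖ ^ 2

theorem sq_sum_abs_mul_rpow_mul_le {ι : Type*} (s : Finset ι) {a : ι → ℝ}
    (ha : ∀ k ∈ s, 0 < a k) (p x : ι → ℝ) :
    (∑ k ∈ s, |p k| * a k ^ (2 * (p k - 1)) * x k) ^ 2
      ≤ (∑ k ∈ s, p k ^ 2 * a k ^ (2 * (p k - 2)) * x k ^ 2) * ∑ k ∈ s, a k ^ (2 * p k) := by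
  have hsplit : ∀ k ∈ s, |p k| * a k ^ (2 * (p k - 1)) * x k
      = (|p k| * a k ^ (p k - 2) * x k) * a k ^ p k := fun k hk => by
    have : a k ^ (2 * (p k - 1)) = a k ^ (p k - 2) * a k ^ p k := by
      rw [← Real.rpow_add (ha k hk)]; ring_nf
    rw [this]; ring
  have hleft : ∀ k ∈ s, p k ^ 2 * a k ^ (2 * (p k - 2)) * x k ^ 2
      = (|p k| * a k ^ (p k - 2) * x k) ^ 2 := fun k hk => by
    rw [mul_pow, mul_pow, sq_abs, ← Real.rpow_mul_natCast (ha k hk).le, mul_comm (p k - 2)]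
    norm_num
  have hright : ∀ k ∈ s, a k ^ (2 * p k) = (a k ^ p k) ^ 2 := fun k hk => by
    rw [← Real.rpow_mul_natCast (ha k hk).le, mul_comm (p k)]
    norm_num
  rw [Finset.sum_congr rfl hsplit, Finset.sum_congr rfl hleft, Finset.sum_congr rfl hright]
  exact Finset.sum_mul_sq_le_sq_mul_sq s _ _

theorem sq_mul_rpow_mul_norm_inner_sq_le {𝕜 E : Type*} [RCLike 𝕜] [NormedAddCommGroup E]
    [InnerProductSpace 𝕜 E] {w : E} (hw : w ≠ 0) (η : E) {p : ℝ} (hp : 0 ≤ p) :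
    p ^ 2 * ‖w‖ ^ (2 * (p - 2)) * ‖inner 𝕜 w η‖ ^ 2
      ≤ p * (p - 1) * ‖w‖ ^ (2 * (p - 2)) * ‖inner 𝕜 w η‖ ^ 2
        + p * ‖w‖ ^ (2 * (p - 1)) * ‖η‖ ^ 2 := by
  have hsplit : ‖w‖ ^ (2 * (p - 1)) = ‖w‖ ^ (2 * (p - 2)) * ‖w‖ ^ 2 := by
    rw [← Real.rpow_two, ← Real.rpow_add (norm_pos_iff.mpr hw)]
    ring_nf
  have hcs : ‖inner 𝕜 w η‖ ^ 2 ≤ ‖w‖ ^ 2 * ‖η‖ ^ 2 := by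
    rw [← mul_pow]
    exact pow_le_pow_left₀ (norm_nonneg _) (norm_inner_le_norm w η) 2
  have hpw : 0 ≤ p * ‖w‖ ^ (2 * (p - 2)) := mul_nonneg hp (Real.rpow_nonneg (norm_nonneg _) _)
  rw [hsplit]
  linear_combination mul_le_mul_of_nonneg_left hcs hpw

theorem sq_mul_mul_norm_inner_sq_le_of_tangent {E ι : Type*} [Fintype ι] {F : ι → Type*}
    [NormedAddCommGroup E] [InnerProductSpace ℂ E]
    [∀ k, NormedAddCommGroup (F k)] [∀ k, InnerProductSpace ℂ (F k)]
    (p : ι → ℝ) (μ : ℝ) {e : ℝ} (he : 0 < e) (z₀ ζ : E) (w₀ η : ∀ k, F k)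
    (hw₀ : ∀ k, w₀ k ≠ 0) (hbd : ∑ k, ‖w₀ k‖ ^ (2 * p k) = e)
    (htan : ∑ k, ((p k * ‖w₀ k‖ ^ (2 * (p k - 1)) : ℝ) : ℂ) * ⟪w₀ k, η k⟫
      + ((μ * e : ℝ) : ℂ) * ⟪z₀, ζ⟫ = 0) :
    μ ^ 2 * e * ‖⟪z₀, ζ⟫‖ ^ 2
      ≤ ∑ k, p k ^ 2 * ‖w₀ k‖ ^ (2 * (p k - 2)) * ‖⟪w₀ k, η k⟫‖ ^ 2 := by
  have hnormal : |μ| * e * ‖⟪z₀, ζ⟫‖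
      ≤ ∑ k, |p k| * ‖w₀ k‖ ^ (2 * (p k - 1)) * ‖⟪w₀ k, η k⟫‖ :=
    calc |μ| * e * ‖⟪z₀, ζ⟫‖ = ‖((μ * e : ℝ) : ℂ) * ⟪z₀, ζ⟫‖ := by
          rw [norm_mul, Complex.norm_real, Real.norm_eq_abs, abs_mul, abs_of_pos he]
      _ = ‖∑ k, ((p k * ‖w₀ k‖ ^ (2 * (p k - 1)) : ℝ) : ℂ) * ⟪w₀ k, η k⟫‖ := by
          rw [eq_neg_of_add_eq_zero_right htan, norm_neg]
      _ ≤ ∑ k, ‖((p k * ‖w₀ k‖ ^ (2 * (p k - 1)) : ℝ) : ℂ) * ⟪w₀ k, η k⟫‖ := norm_sum_le _ _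
      _ = ∑ k, |p k| * ‖w₀ k‖ ^ (2 * (p k - 1)) * ‖⟪w₀ k, η k⟫‖ := by
          refine Finset.sum_congr rfl fun k _ => ?_
          rw [norm_mul, Complex.norm_real, Real.norm_eq_abs, abs_mul,
            abs_of_nonneg (Real.rpow_nonneg (norm_nonneg _) _)]
  have hcs := sq_sum_abs_mul_rpow_mul_le Finset.univ (fun k _ => norm_pos_iff.mpr (hw₀ k))
    p (fun k => ‖⟪w₀ k, η k⟫‖)
  rw [hbd] at hcs
  refine le_of_mul_le_mul_right ?_ he
  calc μ ^ 2 * e * ‖⟪z₀, ζ⟫‖ ^ 2 * e = (|μ| * e * ‖⟪z₀, ζ⟫‖) ^ 2 := by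
        rw [mul_pow, mul_pow, sq_abs]; ring
    _ ≤ _ := (pow_le_pow_left₀ (by positivity) hnormal 2).trans hcs

theorem leviForm_lower_bound_general
    (n₀ l : ℕ) (n : Fin l → ℕ) (p : Fin l → ℝ) (hp : ∀ i, 0 < p i)
    (μ : ℝ) (hμ : 0 < μ)
    (z₀ : EuclideanSpace ℂ (Fin n₀)) (w₀ : (i : Fin l) → EuclideanSpace ℂ (Fin (n i)))
    (hw₀ : ∀ k, w₀ k ≠ 0)
    (hbd : ∑ k, ‖w₀ k‖ ^ (2 * p k) = Real.exp (-μ * ‖z₀‖ ^ 2))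
    (ζ : EuclideanSpace ℂ (Fin n₀)) (η : (i : Fin l) → EuclideanSpace ℂ (Fin (n i)))
    (htan : ∑ k, ((p k * ‖w₀ k‖ ^ (2 * (p k - 1)) : ℝ) : ℂ) * ⟪w₀ k, η k⟫
      + ((μ * Real.exp (-μ * ‖z₀‖ ^ 2) : ℝ) : ℂ) * ⟪z₀, ζ⟫ = 0) :
    μ * Real.exp (-μ * ‖z₀‖ ^ 2) * ‖ζ‖ ^ 2 ≤ leviForm n₀ l n p μ z₀ w₀ ζ η ∧
      (ζ ≠ 0 → 0 < leviForm n₀ l n p μ z₀ w₀ ζ η) := by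
  have hnormal := sq_mul_mul_norm_inner_sq_le_of_tangent p μ (Real.exp_pos _) z₀ ζ w₀ η
    hw₀ hbd htan
  have hblocks : ∑ k, p k ^ 2 * ‖w₀ k‖ ^ (2 * (p k - 2)) * ‖⟪w₀ k, η k⟫‖ ^ 2
      ≤ (∑ k, p k * (p k - 1) * ‖w₀ k‖ ^ (2 * (p k - 2)) * ‖⟪w₀ k, η k⟫‖ ^ 2)
        + ∑ k, p k * ‖w₀ k‖ ^ (2 * (p k - 1)) * ‖η k‖ ^ 2 := by
    rw [← Finset.sum_add_distrib]
    exact Finset.sum_le_sum fun k _ => sq_mul_rpow_mul_norm_inner_sq_le (hw₀ k) (η k) (hp k).le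
  have hbound : μ * Real.exp (-μ * ‖z₀‖ ^ 2) * ‖ζ‖ ^ 2 ≤ leviForm n₀ l n p μ z₀ w₀ ζ η := by
    unfold leviForm
    linarith
  refine ⟨hbound, fun hζ => lt_of_lt_of_le ?_ hbound⟩
  have := norm_pos_iff.mpr hζ
  positivity

/-- The key Levi form estimate: at a boundary point `(z₀,w₀)` with all blocks
`w_{(k)0} ≠ 0`, every complex tangent vector `T = (ζ,η)` satisfies
`L_ρ(T,T) ≥ μ e^{-μ‖z₀‖²} ‖ζ‖²`; in particular `L_ρ(T,T) > 0` whenever `ζ ≠ 0`. -/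
theorem leviForm_lower_bound
    (n₀ l : ℕ) (n : Fin l → ℕ) (hn : ∀ i, 0 < n i) (p : Fin l → ℝ) (hp : ∀ i, 0 < p i)
    (μ : ℝ) (hμ : 0 < μ)
    (z₀ : EuclideanSpace ℂ (Fin n₀)) (w₀ : (i : Fin l) → EuclideanSpace ℂ (Fin (n i)))
    (hw₀ : ∀ k, w₀ k ≠ 0)
    (hbd : ∑ k, ‖w₀ k‖ ^ (2 * p k) = Real.exp (-μ * ‖z₀‖ ^ 2))
    (ζ : EuclideanSpace ℂ (Fin n₀)) (η : (i : Fin l) → EuclideanSpace ℂ (Fin (n i)))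
    (htan : ∑ k, ((p k * ‖w₀ k‖ ^ (2 * (p k - 1)) : ℝ) : ℂ) * ⟪w₀ k, η k⟫
      + ((μ * Real.exp (-μ * ‖z₀‖ ^ 2) : ℝ) : ℂ) * ⟪z₀, ζ⟫ = 0) :
    μ * Real.exp (-μ * ‖z₀‖ ^ 2) * ‖ζ‖ ^ 2 ≤ leviForm n₀ l n p μ z₀ w₀ ζ η ∧
      (ζ ≠ 0 → 0 < leviForm n₀ l n p μ z₀ w₀ ζ η) :=
  leviForm_lower_bound_general n₀ l n p hp μ hμ z₀ w₀ hw₀ hbd ζ η htan
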